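/- arXiv:0901.0696 — 3 statements merged into one kernel-verified Lean document; each statement's English description precedes it below -/
import Mathlib

section
/- The number of phylogenetic trees on n labeled leaves (rooted non-plane binary trees whose leaves are labeled by 1,...,n and whose internal nodes all have exactly two children) equals the double factorial (2n-3)!! = 1·3·5···(2n-3), for all n ≥ 2. -/
open scoped Classical

/-- Plane binary trees: every node has outdegree 0 or 2. -/
inductive BT where
  | leaf : BT
  | node : BT → BT → BT

/-- Isomorphism of rooted binary trees with *unordered* children. -/
inductive Iso : BT → BT → Prop
  | leaf : Iso .leaf .leaf
  | node {a b c d} : Iso a c → Iso b d → Iso (.node a b) (.node c d)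
  | swap {a b c d} : Iso a d → Iso b c → Iso (.node a b) (.node c d)

theorem Iso.rfl : ∀ t, Iso t t
  | .leaf => .leaf
  | .node l r => .node (Iso.rfl l) (Iso.rfl r)

theorem Iso.symm' {a b : BT} (h : Iso a b) : Iso b a := by
  induction h with
  | leaf => exact .leaf
  | node h1 h2 ih1 ih2 => exact .node ih1 ih2
  | swap h1 h2 ih1 ih2 => exact .swap ih2 ih1

theorem Iso.trans' : ∀ {a b c : BT}, Iso a b → Iso b c → Iso a c := by
  intro a b c h1
  induction h1 generalizing c with
  | leaf => exact fun h2 => h2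
  | node g1 g2 ih1 ih2 =>
      intro h2
      cases h2 with
      | node k1 k2 => exact .node (ih1 k1) (ih2 k2)
      | swap k1 k2 => exact .swap (ih1 k1) (ih2 k2)
  | swap g1 g2 ih1 ih2 =>
      intro h2
      cases h2 with
      | node k1 k2 => exact .swap (ih1 k2) (ih2 k1)
      | swap k1 k2 => exact .node (ih1 k2) (ih2 k1)

instance btSetoid : Setoid BT :=
  ⟨Iso, ⟨Iso.rfl, Iso.symm', Iso.trans'⟩⟩

/-- Otter trees: isomorphism classes of unordered rooted binary trees. -/
def Otter : Type := Quotient btSetoid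

/-- Number of leaves. -/
def leavesBT : BT → ℕ
  | .leaf => 1
  | .node l r => leavesBT l + leavesBT r

/-- Number of internal (binary) nodes. -/
def internalsBT : BT → ℕ
  | .leaf => 0
  | .node l r => internalsBT l + internalsBT r + 1

/-- Number of symmetrical nodes: internal nodes whose two subtrees are isomorphic. -/
noncomputable def symBT : BT → ℕ
  | .leaf => 0
  | .node l r => symBT l + symBT r + (if Iso l r then 1 else 0)

theorem leaves_iso {a b : BT} (h : Iso a b) : leavesBT a = leavesBT b := by
  induction h with
  | leaf => rfl
  | node h1 h2 ih1 ih2 => simp [leavesBT, ih1, ih2]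
  | swap h1 h2 ih1 ih2 => simp [leavesBT, ih1, ih2]; omega

theorem internals_iso {a b : BT} (h : Iso a b) : internalsBT a = internalsBT b := by
  induction h with
  | leaf => rfl
  | node h1 h2 ih1 ih2 => simp [internalsBT, ih1, ih2]
  | swap h1 h2 ih1 ih2 => simp [internalsBT, ih1, ih2]; omega

theorem sym_iso {a b : BT} (h : Iso a b) : symBT a = symBT b := by
  induction h with
  | leaf => rfl
  | @node a b c d h1 h2 ih1 ih2 =>
      have hiff : Iso a b ↔ Iso c d :=
        ⟨fun hab => (h1.symm'.trans' hab).trans' h2,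
         fun hcd => (h1.trans' hcd).trans' h2.symm'⟩
      simp only [symBT, ih1, ih2, if_congr hiff rfl rfl]
  | @swap a b c d h1 h2 ih1 ih2 =>
      have hiff : Iso a b ↔ Iso c d :=
        ⟨fun hab => (h2.symm'.trans' hab.symm').trans' h1,
         fun hcd => (h1.trans' hcd.symm').trans' h2.symm'⟩
      simp only [symBT, ih1, ih2, if_congr hiff rfl rfl]
      omega

def Otter.leaves : Otter → ℕ := Quotient.lift leavesBT fun _ _ h => leaves_iso h
def Otter.internals : Otter → ℕ := Quotient.lift internalsBT fun _ _ h => internals_iso h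
noncomputable def Otter.sym : Otter → ℕ := Quotient.lift symBT fun _ _ h => sym_iso h

/-- The set (as a type) of Otter trees with `n` leaves. -/
def OtterN (n : ℕ) : Type := {q : Otter // q.leaves = n}

/-- Wedderburn–Etherington numbers: number of Otter trees with `n` leaves. -/
noncomputable def WE (n : ℕ) : ℕ := Nat.card (OtterN n)

/-- Binary trees with labeled leaves. -/
inductive LBT where
  | leaf : ℕ → LBT
  | node : LBT → LBT → LBT

/-- Label-preserving isomorphism with unordered children. -/
inductive LIso : LBT → LBT → Prop
  | leaf (k : ℕ) : LIso (.leaf k) (.leaf k)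
  | node {a b c d} : LIso a c → LIso b d → LIso (.node a b) (.node c d)
  | swap {a b c d} : LIso a d → LIso b c → LIso (.node a b) (.node c d)

theorem LIso.rfl : ∀ t, LIso t t
  | .leaf k => .leaf k
  | .node l r => .node (LIso.rfl l) (LIso.rfl r)

theorem LIso.symm' {a b : LBT} (h : LIso a b) : LIso b a := by
  induction h with
  | leaf k => exact .leaf k
  | node h1 h2 ih1 ih2 => exact .node ih1 ih2
  | swap h1 h2 ih1 ih2 => exact .swap ih2 ih1

theorem LIso.trans' : ∀ {a b c : LBT}, LIso a b → LIso b c → LIso a c := by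
  intro a b c h1
  induction h1 generalizing c with
  | leaf k => exact fun h2 => h2
  | node g1 g2 ih1 ih2 =>
      intro h2
      cases h2 with
      | node k1 k2 => exact .node (ih1 k1) (ih2 k2)
      | swap k1 k2 => exact .swap (ih1 k1) (ih2 k2)
  | swap g1 g2 ih1 ih2 =>
      intro h2
      cases h2 with
      | node k1 k2 => exact .swap (ih1 k2) (ih2 k1)
      | swap k1 k2 => exact .node (ih1 k2) (ih2 k1)

instance ltSetoid : Setoid LBT :=
  ⟨LIso, ⟨LIso.rfl, LIso.symm', LIso.trans'⟩⟩

/-- Labeled (phylogenetic-type) trees up to label-preserving isomorphism. -/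
def LTree : Type := Quotient ltSetoid

/-- The multiset of leaf labels. -/
def labelsLT : LBT → Multiset ℕ
  | .leaf k => {k}
  | .node l r => labelsLT l + labelsLT r

/-- The underlying unlabeled shape of a labeled tree. -/
def shapeLT : LBT → BT
  | .leaf _ => .leaf
  | .node l r => .node (shapeLT l) (shapeLT r)

theorem labels_iso {a b : LBT} (h : LIso a b) : labelsLT a = labelsLT b := by
  induction h with
  | leaf k => rfl
  | node h1 h2 ih1 ih2 => simp [labelsLT, ih1, ih2]
  | swap h1 h2 ih1 ih2 => simp [labelsLT, ih1, ih2]; exact add_comm _ _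

theorem shape_iso {a b : LBT} (h : LIso a b) : Iso (shapeLT a) (shapeLT b) := by
  induction h with
  | leaf k => exact .leaf
  | node h1 h2 ih1 ih2 => exact .node ih1 ih2
  | swap h1 h2 ih1 ih2 => exact .swap ih1 ih2

def LTree.labels : LTree → Multiset ℕ := Quotient.lift labelsLT fun _ _ h => labels_iso h

def LTree.shape : LTree → Otter :=
  Quotient.lift (fun t => (⟦shapeLT t⟧ : Otter)) fun _ _ h => Quotient.sound (shape_iso h)

/-- Phylogenetic trees of size `n`: labeled trees whose leaf labels are exactly `1, …, n`. -/
def Phylo (n : ℕ) : Type := {q : LTree // q.labels = (Finset.Icc 1 n).val}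

/-- The number of phylogenetic trees of size `n`. -/
noncomputable def phyloCount (n : ℕ) : ℕ := Nat.card (Phylo n)

/-- The double factorial `n!! = n·(n-2)·(n-4)···`. -/
def doubleFac : ℕ → ℕ
  | 0 => 1
  | 1 => 1
  | (n+2) => (n+2) * doubleFac n

/-- The probability that two independent uniformly random phylogenetic trees of
size `n` are isomorphic (have the same shape). -/
noncomputable def pIso (n : ℕ) : ℚ :=
  (Nat.card {pp : Phylo n × Phylo n // pp.1.1.shape = pp.2.1.shape} : ℚ)
    / (Nat.card (Phylo n) : ℚ) ^ 2

/-!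
A phylogenetic tree on `n + 1` leaves arises from exactly one phylogenetic tree on
`n` leaves by grafting the leaf `n + 1` onto one of its `2n - 1` edges (the `2n - 2` edges and a
new edge above the root), and removing that leaf inverts the grafting. Hence the counts satisfy
`c (n + 1) = (2n - 1) c n` with `c 1 = 1`. To count concrete trees rather than isomorphism
classes, each class with distinct labels is represented by its unique canonical tree, in which
the left child of every node carries the smaller least label.
-/

namespace LBT

def minLabel : LBT → ℕ
  | .leaf k => k
  | .node l r => min l.minLabel r.minLabel

def IsCanonical : LBT → Prop
  | .leaf _ => True
  | .node l r => l.IsCanonical ∧ r.IsCanonical ∧ l.minLabel < r.minLabel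

def canonicalize : LBT → LBT
  | .leaf k => .leaf k
  | .node l r =>
      if l.canonicalize.minLabel < r.canonicalize.minLabel then
        .node l.canonicalize r.canonicalize
      else .node r.canonicalize l.canonicalize

/-- The trees obtained by grafting a new leaf `m` onto an edge of `t`, the edge above the
root included. -/
def graftings (m : ℕ) : LBT → List LBT
  | .leaf k => [.node (.leaf k) (.leaf m)]
  | .node l r => .node (.node l r) (.leaf m) ::
      ((l.graftings m).map (.node · r) ++ (r.graftings m).map (.node l ·))

noncomputable def eraseLeaf (m : ℕ) : LBT → LBT
  | .leaf k => .leaf k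
  | .node l r =>
      if l = .leaf m then r
      else if r = .leaf m then l
      else if m ∈ labelsLT l then .node (l.eraseLeaf m) r
      else .node l (r.eraseLeaf m)

theorem labelsLT_ne_zero : ∀ t : LBT, labelsLT t ≠ 0
  | .leaf k => Multiset.singleton_ne_zero k
  | .node l _ => fun h => labelsLT_ne_zero l (add_eq_zero.1 h).1

theorem minLabel_mem : ∀ t : LBT, t.minLabel ∈ labelsLT t
  | .leaf k => Multiset.mem_singleton_self k
  | .node l r => by
      rcases min_choice l.minLabel r.minLabel with h | h <;>
        simp only [minLabel, labelsLT, Multiset.mem_add, h, minLabel_mem, true_or, or_true]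

theorem minLabel_le : ∀ {t : LBT} {k : ℕ}, k ∈ labelsLT t → t.minLabel ≤ k
  | .leaf _, _, h => (Multiset.mem_singleton.1 h).ge
  | .node _ _, _, h => by
      rcases Multiset.mem_add.1 h with h | h
      · exact (min_le_left _ _).trans (minLabel_le h)
      · exact (min_le_right _ _).trans (minLabel_le h)

theorem minLabel_congr {a b : LBT} (h : labelsLT a = labelsLT b) : a.minLabel = b.minLabel :=
  (minLabel_le (h ▸ b.minLabel_mem)).antisymm (minLabel_le (h ▸ a.minLabel_mem))

theorem labelsLT_canonicalize : ∀ t : LBT, labelsLT t.canonicalize = labelsLT t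
  | .leaf _ => rfl
  | .node l r => by
      unfold canonicalize
      split <;> simp only [labelsLT, labelsLT_canonicalize l, labelsLT_canonicalize r, add_comm]

theorem liso_canonicalize : ∀ t : LBT, LIso t t.canonicalize
  | .leaf k => .leaf k
  | .node l r => by
      unfold canonicalize
      split
      · exact .node (liso_canonicalize l) (liso_canonicalize r)
      · exact .swap (liso_canonicalize l) (liso_canonicalize r)

theorem isCanonical_canonicalize : ∀ t : LBT, (labelsLT t).Nodup → t.canonicalize.IsCanonical
  | .leaf _, _ => trivial
  | .node l r, hnd => by
      obtain ⟨hl, hr, hdisj⟩ := Multiset.nodup_add.1 hnd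
      have hne : l.canonicalize.minLabel ≠ r.canonicalize.minLabel := by
        rw [minLabel_congr (labelsLT_canonicalize l), minLabel_congr (labelsLT_canonicalize r)]
        exact fun h => Multiset.disjoint_left.1 hdisj l.minLabel_mem (h ▸ r.minLabel_mem)
      unfold canonicalize
      split
      · exact ⟨isCanonical_canonicalize l hl, isCanonical_canonicalize r hr, by assumption⟩
      · exact ⟨isCanonical_canonicalize r hr, isCanonical_canonicalize l hl, by omega⟩

theorem eq_of_liso_of_isCanonical {a b : LBT} (h : LIso a b) :
    a.IsCanonical → b.IsCanonical → a = b := by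
  induction h with
  | leaf k => exact fun _ _ => rfl
  | node _ _ ih₁ ih₂ =>
      rintro ⟨ha₁, ha₂, -⟩ ⟨hb₁, hb₂, -⟩
      rw [ih₁ ha₁ hb₁, ih₂ ha₂ hb₂]
  | swap h₁ h₂ =>
      rintro ⟨-, -, ha⟩ ⟨-, -, hb⟩
      have := minLabel_congr (labels_iso h₁)
      have := minLabel_congr (labels_iso h₂)
      omega

theorem eq_leaf_of_labelsLT_eq_singleton {t : LBT} {k : ℕ} (h : labelsLT t = {k}) :
    t = .leaf k := by
  cases t with
  | leaf j => rw [Multiset.singleton_inj.1 h]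
  | node l r =>
      have hcard := congrArg Multiset.card h
      simp only [labelsLT, Multiset.card_add, Multiset.card_singleton] at hcard
      have := Multiset.card_pos.2 l.labelsLT_ne_zero
      have := Multiset.card_pos.2 r.labelsLT_ne_zero
      omega

theorem forall_mem_labelsLT_node {p : ℕ → Prop} {l r : LBT} :
    (∀ k ∈ labelsLT (.node l r), p k) ↔ (∀ k ∈ labelsLT l, p k) ∧ ∀ k ∈ labelsLT r, p k := by
  simp only [labelsLT, Multiset.mem_add, or_imp, forall_and]

theorem ne_leaf_of_labelsLT_eq_cons {T : LBT} {m : ℕ} {S : Multiset ℕ} (hS : S ≠ 0)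
    (h : labelsLT T = m ::ₘ S) : T ≠ .leaf m := by
  rintro rfl
  exact hS (Multiset.cons_inj_right m |>.1 h.symm)

section Grafting

variable {m : ℕ}

theorem node_mem_graftings (m : ℕ) (t : LBT) : .node t (.leaf m) ∈ t.graftings m := by
  cases t <;> simp [graftings]

theorem ne_leaf_of_mem_graftings {t T : LBT} (k : ℕ) (hT : T ∈ t.graftings m) : T ≠ .leaf k := by
  cases t <;> simp only [graftings, List.mem_cons, List.mem_append, List.mem_map] at hT <;> aesop

theorem labelsLT_of_mem_graftings : ∀ {t T : LBT}, T ∈ t.graftings m →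
    labelsLT T = m ::ₘ labelsLT t
  | .leaf k, T, hT => by
      rw [List.mem_singleton.1 hT]
      exact (add_comm _ _).trans (Multiset.singleton_add m _)
  | .node l r, T, hT => by
      simp only [graftings, List.mem_cons, List.mem_append, List.mem_map] at hT
      rcases hT with rfl | ⟨l', hl', rfl⟩ | ⟨r', hr', rfl⟩
      · exact (add_comm _ _).trans (Multiset.singleton_add m _)
      · simp only [labelsLT, labelsLT_of_mem_graftings hl', Multiset.cons_add]
      · simp only [labelsLT, labelsLT_of_mem_graftings hr', Multiset.add_cons]

theorem length_graftings (m : ℕ) :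
    ∀ t : LBT, (t.graftings m).length + 1 = 2 * Multiset.card (labelsLT t)
  | .leaf _ => rfl
  | .node l r => by
      have := length_graftings m l
      have := length_graftings m r
      simp only [graftings, labelsLT, List.length_cons, List.length_append, List.length_map,
        Multiset.card_add]
      omega

theorem nodup_graftings : ∀ {t : LBT}, m ∉ labelsLT t → (t.graftings m).Nodup
  | .leaf _, _ => List.nodup_singleton _
  | .node l r, hm => by
      obtain ⟨hml, hmr⟩ := not_or.1 (Multiset.mem_add.not.1 hm)
      have hr : r ≠ .leaf m := fun h => hmr (h ▸ Multiset.mem_singleton_self m)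
      simp only [graftings, List.nodup_cons, List.nodup_append, List.mem_append, List.mem_map]
      refine ⟨?_, (nodup_graftings hml).map fun _ _ h => (LBT.node.inj h).1,
        (nodup_graftings hmr).map fun _ _ h => (LBT.node.inj h).2, ?_⟩
      · rintro (⟨l', -, h⟩ | ⟨r', hr', h⟩)
        · exact hr (LBT.node.inj h).2
        · exact ne_leaf_of_mem_graftings m hr' (LBT.node.inj h).2
      · rintro _ ⟨l', hl', rfl⟩ _ ⟨r', -, rfl⟩ h
        have := (LBT.node.inj h).1 ▸ labelsLT_of_mem_graftings hl'
        exact hml (this ▸ Multiset.mem_cons_self m _)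

theorem minLabel_of_mem_graftings {t T : LBT} (hT : T ∈ t.graftings m)
    (hm : ∀ k ∈ labelsLT t, k < m) : T.minLabel = t.minLabel := by
  have hlabels := labelsLT_of_mem_graftings hT
  have hle : T.minLabel ≤ t.minLabel :=
    minLabel_le (hlabels ▸ Multiset.mem_cons_of_mem t.minLabel_mem)
  rcases Multiset.mem_cons.1 (hlabels ▸ T.minLabel_mem) with h | h
  · have := hm _ t.minLabel_mem
    omega
  · exact hle.antisymm (minLabel_le h)

theorem isCanonical_of_mem_graftings : ∀ {t T : LBT}, T ∈ t.graftings m →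
    (∀ k ∈ labelsLT t, k < m) → t.IsCanonical → T.IsCanonical
  | .leaf k, T, hT, hm, _ => by
      rw [List.mem_singleton.1 hT]
      exact ⟨trivial, trivial, hm k (Multiset.mem_singleton_self k)⟩
  | .node l r, T, hT, hm, hc => by
      obtain ⟨hml, hmr⟩ := forall_mem_labelsLT_node.1 hm
      simp only [graftings, List.mem_cons, List.mem_append, List.mem_map] at hT
      rcases hT with rfl | ⟨l', hl', rfl⟩ | ⟨r', hr', rfl⟩
      · exact ⟨hc, trivial, hm _ (LBT.node l r).minLabel_mem⟩
      · refine ⟨isCanonical_of_mem_graftings hl' hml hc.1, hc.2.1, ?_⟩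
        rw [minLabel_of_mem_graftings hl' hml]
        exact hc.2.2
      · refine ⟨hc.1, isCanonical_of_mem_graftings hr' hmr hc.2.1, ?_⟩
        rw [minLabel_of_mem_graftings hr' hmr]
        exact hc.2.2

theorem eraseLeaf_of_mem_graftings : ∀ {t T : LBT}, T ∈ t.graftings m → m ∉ labelsLT t →
    T.eraseLeaf m = t
  | .leaf k, T, hT, hm => by
      have hk : k ≠ m := fun h => hm (h ▸ Multiset.mem_singleton_self k)
      simp [List.mem_singleton.1 hT, eraseLeaf, hk]
  | .node l r, T, hT, hm => by
      obtain ⟨hml, hmr⟩ := not_or.1 (Multiset.mem_add.not.1 hm)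
      have hl : l ≠ .leaf m := fun h => hml (h ▸ Multiset.mem_singleton_self m)
      have hr : r ≠ .leaf m := fun h => hmr (h ▸ Multiset.mem_singleton_self m)
      simp only [graftings, List.mem_cons, List.mem_append, List.mem_map] at hT
      rcases hT with rfl | ⟨l', hl', rfl⟩ | ⟨r', hr', rfl⟩
      · simp [eraseLeaf]
      · have hm' : m ∈ labelsLT l' := labelsLT_of_mem_graftings hl' ▸ Multiset.mem_cons_self m _
        simp [eraseLeaf, ne_leaf_of_mem_graftings m hl', hr, hm',
          eraseLeaf_of_mem_graftings hl' hml]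
      · simp [eraseLeaf, ne_leaf_of_mem_graftings m hr', hl, hml,
          eraseLeaf_of_mem_graftings hr' hmr]

theorem labelsLT_eraseLeaf : ∀ {T : LBT}, m ∈ labelsLT T → T ≠ .leaf m →
    labelsLT (T.eraseLeaf m) = (labelsLT T).erase m
  | .leaf k, hm, hT => absurd (congrArg LBT.leaf (Multiset.mem_singleton.1 hm)).symm hT
  | .node l r, hm, _ => by
      unfold eraseLeaf
      split_ifs with hl hr hml
      · simp [hl, labelsLT]
      · simp [hr, labelsLT, Multiset.erase_add_right_pos]
      · rw [labelsLT, labelsLT, Multiset.erase_add_left_pos _ hml, labelsLT_eraseLeaf hml hl]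
      · have hmr := (Multiset.mem_add.1 hm).resolve_left hml
        rw [labelsLT, labelsLT, Multiset.erase_add_right_pos _ hmr, labelsLT_eraseLeaf hmr hr]

theorem isCanonical_eraseLeaf : ∀ {T : LBT}, T.IsCanonical → (∀ k ∈ labelsLT T, k ≤ m) →
    m ∈ labelsLT T → (T.eraseLeaf m).IsCanonical
  | .leaf _, _, _, _ => trivial
  | .node l r, ⟨hl, hr, hlr⟩, hbound, hm => by
      obtain ⟨hboundl, hboundr⟩ := forall_mem_labelsLT_node.1 hbound
      have hmr : r.minLabel ≤ m := hboundr _ r.minLabel_mem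
      unfold eraseLeaf
      split_ifs with hlm hrm hml
      · exact hr
      · exact hl
      · refine ⟨isCanonical_eraseLeaf hl hboundl hml, hr, lt_of_le_of_lt (minLabel_le ?_) hlr⟩
        rw [labelsLT_eraseLeaf hml hlm]
        exact Multiset.mem_erase_of_ne (by omega) |>.2 l.minLabel_mem
      · have hmr' := (Multiset.mem_add.1 hm).resolve_left hml
        refine ⟨hl, isCanonical_eraseLeaf hr hboundr hmr', hlr.trans_le (minLabel_le ?_)⟩
        exact Multiset.mem_of_mem_erase (labelsLT_eraseLeaf hmr' hrm ▸ (r.eraseLeaf m).minLabel_mem)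

theorem mem_graftings_eraseLeaf : ∀ {T : LBT}, T.IsCanonical → (∀ k ∈ labelsLT T, k ≤ m) →
    m ∈ labelsLT T → T ≠ .leaf m → T ∈ (T.eraseLeaf m).graftings m
  | .leaf k, _, _, hm, hT => absurd (congrArg LBT.leaf (Multiset.mem_singleton.1 hm)).symm hT
  | .node l r, ⟨hl, hr, hlr⟩, hbound, hm, _ => by
      obtain ⟨hboundl, hboundr⟩ := forall_mem_labelsLT_node.1 hbound
      have hmr : r.minLabel ≤ m := hboundr _ r.minLabel_mem
      unfold eraseLeaf
      split_ifs with hlm hrm hml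
      · rw [hlm] at hlr
        exact absurd hlr (by simpa [minLabel] using hmr)
      · rw [hrm]
        exact node_mem_graftings m l
      · refine List.mem_cons_of_mem _ (List.mem_append_left _ (List.mem_map_of_mem ?_))
        exact mem_graftings_eraseLeaf hl hboundl hml hlm
      · have hmr' := (Multiset.mem_add.1 hm).resolve_left hml
        refine List.mem_cons_of_mem _ (List.mem_append_right _ (List.mem_map_of_mem ?_))
        exact mem_graftings_eraseLeaf hr hboundr hmr' hrm

theorem mem_graftings_iff {t T : LBT} (ht : t.IsCanonical) (hm : ∀ k ∈ labelsLT t, k < m) :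
    T ∈ t.graftings m ↔
      T.IsCanonical ∧ labelsLT T = m ::ₘ labelsLT t ∧ T.eraseLeaf m = t := by
  refine ⟨fun hT => ⟨isCanonical_of_mem_graftings hT hm ht, labelsLT_of_mem_graftings hT,
    eraseLeaf_of_mem_graftings hT fun h => (hm m h).false⟩, ?_⟩
  rintro ⟨hT, hlabels, rfl⟩
  have hbound : ∀ k ∈ labelsLT T, k ≤ m := by
    rw [hlabels]
    exact Multiset.forall_mem_cons.2 ⟨le_rfl, fun k hk => (hm k hk).le⟩
  exact mem_graftings_eraseLeaf hT hbound (hlabels ▸ Multiset.mem_cons_self m _)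
    (ne_leaf_of_labelsLT_eq_cons (labelsLT_ne_zero _) hlabels)

end Grafting

end LBT

def CanonicalTree (S : Multiset ℕ) : Type := {t : LBT // t.IsCanonical ∧ labelsLT t = S}

noncomputable def canonicalTreeEquiv {S : Multiset ℕ} (hS : S.Nodup) :
    CanonicalTree S ≃ {q : LTree // q.labels = S} := by
  refine Equiv.ofBijective (fun t => ⟨⟦t.1⟧, t.2.2⟩) ⟨fun a b hab => ?_, fun ⟨q, hq⟩ => ?_⟩
  · exact Subtype.ext (LBT.eq_of_liso_of_isCanonical
      (Quotient.exact (congrArg Subtype.val hab)) a.2.1 b.2.1)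
  · obtain ⟨t, rfl⟩ := Quotient.exists_rep q
    have ht : labelsLT t = S := hq
    refine ⟨⟨t.canonicalize, t.isCanonical_canonicalize (ht ▸ hS),
      t.labelsLT_canonicalize.trans ht⟩, Subtype.ext (Quotient.sound ?_)⟩
    exact (LBT.liso_canonicalize t).symm'

theorem card_canonicalTree_singleton (k : ℕ) : Nat.card (CanonicalTree {k}) = 1 :=
  Nat.card_eq_one_iff_exists.2 ⟨⟨.leaf k, trivial, rfl⟩, fun t =>
    Subtype.ext (LBT.eq_leaf_of_labelsLT_eq_singleton t.2.2)⟩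

namespace CanonicalTree

variable {S : Multiset ℕ} {m : ℕ}

theorem mem_labelsLT (T : CanonicalTree (m ::ₘ S)) : m ∈ labelsLT T.1 := by
  rw [T.2.2]
  exact Multiset.mem_cons_self m S

noncomputable def eraseLeaf (hS : S ≠ 0) (hm : ∀ k ∈ S, k < m) (T : CanonicalTree (m ::ₘ S)) :
    CanonicalTree S :=
  ⟨T.1.eraseLeaf m,
    LBT.isCanonical_eraseLeaf T.2.1
      (by rw [T.2.2]; exact Multiset.forall_mem_cons.2 ⟨le_rfl, fun k hk => (hm k hk).le⟩)
      (mem_labelsLT T),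
    by rw [LBT.labelsLT_eraseLeaf (mem_labelsLT T) (LBT.ne_leaf_of_labelsLT_eq_cons hS T.2.2),
      T.2.2, Multiset.erase_cons_head]⟩

noncomputable def fiberEraseLeafEquiv (hS : S ≠ 0) (hm : ∀ k ∈ S, k < m) (t : CanonicalTree S) :
    {T // eraseLeaf hS hm T = t} ≃ Fin (2 * Multiset.card S - 1) := by
  have hiff := fun T => LBT.mem_graftings_iff (T := T) t.2.1 (t.2.2 ▸ hm)
  have hnodup : (t.1.graftings m).Nodup := LBT.nodup_graftings fun h => (hm m (t.2.2 ▸ h)).false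
  have hlength : (t.1.graftings m).length = 2 * Multiset.card S - 1 := by
    have := LBT.length_graftings m t.1
    rw [t.2.2] at this
    omega
  refine Equiv.trans ?_ (hnodup.getEquiv.symm.trans (finCongr hlength))
  exact
    { toFun := fun T => ⟨T.1.1, (hiff _).2 ⟨T.1.2.1, by rw [T.1.2.2, t.2.2],
        congrArg Subtype.val T.2⟩⟩
      invFun := fun T => ⟨⟨T.1, ((hiff _).1 T.2).1, by rw [((hiff _).1 T.2).2.1, t.2.2]⟩,
        Subtype.ext ((hiff _).1 T.2).2.2⟩
      left_inv := fun _ => rfl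
      right_inv := fun _ => rfl }

end CanonicalTree

theorem card_canonicalTree_cons {S : Multiset ℕ} (hS : S ≠ 0) {m : ℕ} (hm : ∀ k ∈ S, k < m) :
    Nat.card (CanonicalTree (m ::ₘ S)) =
      (2 * Multiset.card S - 1) * Nat.card (CanonicalTree S) :=
  calc Nat.card (CanonicalTree (m ::ₘ S))
      = Nat.card (Σ t, {T // CanonicalTree.eraseLeaf hS hm T = t}) :=
        Nat.card_congr (Equiv.sigmaFiberEquiv _).symm
    _ = Nat.card (CanonicalTree S × Fin (2 * Multiset.card S - 1)) :=
        Nat.card_congr ((Equiv.sigmaCongrRight (CanonicalTree.fiberEraseLeafEquiv hS hm)).trans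
          (Equiv.sigmaEquivProd _ _))
    _ = (2 * Multiset.card S - 1) * Nat.card (CanonicalTree S) := by
        rw [Nat.card_prod, Nat.card_eq_fintype_card (α := Fin _), Fintype.card_fin, mul_comm]

theorem Finset.Icc_add_one_right_val {a b : ℕ} (h : a ≤ b + 1) :
    (Finset.Icc a (b + 1)).val = (b + 1) ::ₘ (Finset.Icc a b).val := by
  rw [← Finset.insert_Icc_right_eq_Icc_add_one h, Finset.insert_val_of_notMem (by simp)]

theorem doubleFac_two_mul_add_one (n : ℕ) :
    doubleFac (2 * n + 1) = (2 * n + 1) * doubleFac (2 * n - 1) := by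
  cases n with
  | zero => rfl
  | succ k =>
      rw [show 2 * (k + 1) + 1 = 2 * k + 1 + 2 by ring, show 2 * (k + 1) - 1 = 2 * k + 1 by omega]
      rfl

theorem card_canonicalTree_Icc (n : ℕ) :
    Nat.card (CanonicalTree (Finset.Icc 1 (n + 1)).val) = doubleFac (2 * n - 1) := by
  induction n with
  | zero => exact card_canonicalTree_singleton 1
  | succ n ih =>
      have hcard : Multiset.card (Finset.Icc 1 (n + 1)).val = n + 1 := by simp
      have hne : (Finset.Icc 1 (n + 1)).val ≠ 0 := by simp
      rw [Finset.Icc_add_one_right_val (by omega), card_canonicalTree_cons hne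
        (fun k hk => by simp only [Finset.mem_val, Finset.mem_Icc] at hk; omega), ih, hcard,
        show 2 * (n + 1) - 1 = 2 * n + 1 by omega, doubleFac_two_mul_add_one]

/-- the number of phylogenetic trees on `n` labeled leaves is `(2n-3)!!`. -/
theorem phyloCount_eq_doubleFac :
    ∀ n : ℕ, 2 ≤ n → phyloCount n = doubleFac (2 * n - 3) := by
  intro n hn
  obtain ⟨k, rfl⟩ : ∃ k, n = k + 1 := ⟨n - 1, by omega⟩
  calc phyloCount (k + 1)
      = Nat.card (CanonicalTree (Finset.Icc 1 (k + 1)).val) :=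
        (Nat.card_congr (canonicalTreeEquiv (Finset.nodup _))).symm
    _ = doubleFac (2 * k - 1) := card_canonicalTree_Icc k
    _ = doubleFac (2 * (k + 1) - 3) := by congr 1
end

section
/- The sequence b_n = (2n-3)!! (with b_1 = 1) satisfies the recurrence b_n = (1/2) Σ_{k=1}^{n-1} C(n,k) b_k b_{n−k} for all n ≥ 2. -/
open scoped Classical

/-! Since `(2m)! = (2m)‼ · (2m-1)‼ = 2^m m! · (2m-1)‼` and `(m+1) Cat_m = C(2m,m)`, one has
`(2k-3)‼ = k! · Cat_{k-1} / 2^{k-1}`. Each summand then becomes `n!/2^{n-2} · Cat_{k-1} Cat_{n-1-k}`,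
and the recurrence reduces to Segner's convolution `Cat_{n-1} = Σ_k Cat_{k-1} Cat_{n-1-k}`. -/

open Nat

theorem doubleFac_eq_doubleFactorial : ∀ n, doubleFac n = n‼
  | 0 | 1 => rfl
  | n + 2 => by rw [doubleFac, doubleFactorial_add_two, doubleFac_eq_doubleFactorial n]

theorem Nat.doubleFactorial_two_mul_sub_one_mul_two_pow (m : ℕ) :
    (2 * m - 1)‼ * 2 ^ m = m.centralBinom * m ! := by
  refine Nat.eq_of_mul_eq_mul_right (factorial_pos m) ?_
  have hodd_even : (2 * m - 1)‼ * (2 * m)‼ = (2 * m)! := by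
    rcases m with _ | m
    · rfl
    · rw [show 2 * (m + 1) = 2 * m + 1 + 1 by ring, factorial_eq_mul_doubleFactorial, mul_comm]
      rfl
  calc (2 * m - 1)‼ * 2 ^ m * m ! = (2 * m - 1)‼ * (2 * m)‼ := by
        rw [doubleFactorial_two_mul, mul_assoc]
    _ = (2 * m)! := hodd_even
    _ = m.centralBinom * m ! * m ! := by
        rw [centralBinom_eq_two_mul_choose,
          ← choose_mul_factorial_mul_factorial (by omega : m ≤ 2 * m),
          show 2 * m - m = m by omega]

theorem Nat.doubleFactorial_two_mul_sub_one_eq_catalan (m : ℕ) :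
    ((2 * m - 1)‼ : ℚ) = catalan m * (m + 1)! / 2 ^ m := by
  have h := doubleFactorial_two_mul_sub_one_mul_two_pow m
  rw [← succ_mul_catalan_eq_centralBinom] at h
  rw [eq_div_iff (by positivity), factorial_succ]
  exact_mod_cast h.trans (by ring)

theorem sum_Ico_catalan_mul_catalan (n : ℕ) (hn : 2 ≤ n) :
    ∑ k ∈ Finset.Ico 1 n, catalan (k - 1) * catalan (n - 1 - k) = catalan (n - 1) := by
  obtain ⟨m, rfl⟩ : ∃ m, n = m + 2 := ⟨n - 2, by omega⟩
  rw [Finset.sum_Ico_eq_sum_range, show m + 2 - 1 = m + 1 by omega, catalan_succ',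
    Finset.Nat.sum_antidiagonal_eq_sum_range_succ (fun i j => catalan i * catalan j)]
  refine Finset.sum_congr (by congr 1) fun i _ => ?_
  congr 2 <;> omega

theorem doubleFac_two_mul_sub_three (k : ℕ) (hk : 1 ≤ k) :
    (doubleFac (2 * k - 3) : ℚ) = catalan (k - 1) * k ! / 2 ^ (k - 1) := by
  obtain ⟨m, rfl⟩ : ∃ m, k = m + 1 := ⟨k - 1, by omega⟩
  rw [show 2 * (m + 1) - 3 = 2 * m - 1 by omega, doubleFac_eq_doubleFactorial,
    doubleFactorial_two_mul_sub_one_eq_catalan, Nat.add_sub_cancel]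

theorem choose_mul_doubleFac_mul_doubleFac (n k : ℕ) (hk : 1 ≤ k) (hkn : k < n) :
    (n.choose k : ℚ) * doubleFac (2 * k - 3) * doubleFac (2 * (n - k) - 3)
      = 2 * (n ! / 2 ^ (n - 1)) * (catalan (k - 1) * catalan (n - 1 - k)) := by
  rw [doubleFac_two_mul_sub_three k hk, doubleFac_two_mul_sub_three (n - k) (by omega)]
  have hchoose : (n.choose k : ℚ) * k ! * (n - k)! = n ! := by
    exact_mod_cast choose_mul_factorial_mul_factorial hkn.le
  have hpow : (2 : ℚ) ^ (k - 1) * 2 ^ (n - k - 1) * 2 = 2 ^ (n - 1) := by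
    rw [← pow_add, ← pow_succ]; congr 1; omega
  rw [← hchoose, ← hpow, show n - k - 1 = n - 1 - k by omega]
  field_simp

/-- the sequence `b_n = (2n-3)!!` satisfies
`b_n = (1/2) Σ_{k=1}^{n-1} C(n,k) b_k b_{n−k}` for `n ≥ 2`. -/
theorem doubleFac_recurrence (n : ℕ) (hn : 2 ≤ n) :
    (doubleFac (2 * n - 3) : ℚ) =
      (1 / 2) * ∑ k ∈ Finset.Ico 1 n,
        (n.choose k : ℚ) * doubleFac (2 * k - 3) * doubleFac (2 * (n - k) - 3) := by
  rw [Finset.sum_congr rfl fun k hk => choose_mul_doubleFac_mul_doubleFac n k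
      (Finset.mem_Ico.1 hk).1 (Finset.mem_Ico.1 hk).2, ← Finset.mul_sum]
  have hconv : ∑ k ∈ Finset.Ico 1 n, (catalan (k - 1) * catalan (n - 1 - k) : ℚ)
      = catalan (n - 1) := by
    exact_mod_cast sum_Ico_catalan_mul_catalan n hn
  rw [hconv, doubleFac_two_mul_sub_three n (by omega)]
  ring
end

section
/- The bivariate generating function F(z,u) = Σ_{t ∈ U} u^{sym(t)} z^{|t|}, summing over all Otter trees t with |t| leaves, satisfies the functional equation F(z,u) = z + (1/2) F(z,u)² + (u − 1/2) F(z², u²) as formal power series. -/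
open scoped Classical

/-- The bivariate generating function `F(z,u) = Σ_t u^{sym t} z^{|t|}` of Otter
trees, as a power series in `z` with coefficients in `ℚ[u]`. -/
noncomputable def Fgen : PowerSeries (Polynomial ℚ) :=
  PowerSeries.mk fun n => ∑ᶠ t : OtterN n, (Polynomial.X : Polynomial ℚ) ^ t.1.sym

/-- The substituted series `F(z², u²)`. -/
noncomputable def Fgen2 : PowerSeries (Polynomial ℚ) :=
  PowerSeries.mk fun n =>
    if n % 2 = 0 then (PowerSeries.coeff (R := Polynomial ℚ) (n / 2) Fgen).comp (Polynomial.X ^ 2)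
    else 0

/-!
Every Otter tree other than the leaf is `node a b` for a unique unordered pair `{a, b}`, and
`sym (node a b) = sym a + sym b + [a = b]`. Summing over ordered pairs `(a, b)` counts each
off-diagonal unordered pair twice and each diagonal one once, so the sum over unordered pairs is
half the ordered sum (the coefficient of `F²`) plus half the diagonal sum. On the diagonal the
root contributes an extra factor `u`, turning that half into `u - 1/2`, and the diagonal sum
`∑ₐ u^(2 sym a) z^(2 |a|)` is `F(z², u²)`.
-/

open Finset

theorem Finset.two_nsmul_sum_image_sym2 {α M : Type*} [DecidableEq α] [AddCommMonoid M]
    (t : Finset (α × α)) (ht : ∀ p ∈ t, p.swap ∈ t) (f : Sym2 α → M) :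
    2 • ∑ z ∈ t.image (fun p => s(p.1, p.2)), f z
      = ∑ p ∈ t, f s(p.1, p.2) + ∑ p ∈ t with p.1 = p.2, f s(p.1, p.2) := by
  rw [sum_filter, ← sum_add_distrib, ← sum_nsmul]
  refine sum_image' _ fun p hp => ?_
  have fiber : {q ∈ t | s(q.1, q.2) = s(p.1, p.2)} = {p, p.swap} := by
    ext q
    simp only [mem_filter, mem_insert, mem_singleton, Sym2.mk_eq_mk_iff]
    constructor
    · exact And.right
    · rintro (rfl | rfl)
      exacts [⟨hp, .inl rfl⟩, ⟨ht p hp, .inr rfl⟩]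
  rw [fiber]
  by_cases hd : p.1 = p.2
  · have : p.swap = p := Prod.ext hd.symm hd
    simp [this, hd, two_nsmul]
  · have hne : p ≠ p.swap := fun h => hd (congrArg Prod.fst h)
    rw [sum_pair hne, Prod.fst_swap, Prod.snd_swap, if_neg hd, if_neg (Ne.symm hd), Sym2.eq_swap,
      two_nsmul, add_zero]

theorem Finset.sum_mul_ite_one {ι R : Type*} [CommRing R] (t : Finset ι) (P : ι → Prop)
    [DecidablePred P] (g : ι → R) (u : R) :
    ∑ i ∈ t, g i * (if P i then u else 1)
      = ∑ i ∈ t, g i + (u - 1) * ∑ i ∈ t with P i, g i := by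
  rw [sum_filter, mul_sum, ← sum_add_distrib]
  refine sum_congr rfl fun i _ => ?_
  split_ifs <;> ring

namespace Otter

def leaf : Otter := ⟦BT.leaf⟧

def node : Otter → Otter → Otter :=
  Quotient.map₂ BT.node fun _ _ h₁ _ _ h₂ => Iso.node h₁ h₂

/- `Otter` is not reducible, so `Quotient.ind` would leave equalities typed in `Quotient btSetoid`,
which the lemmas about `Otter` below cannot rewrite. -/
@[elab_as_elim]
protected theorem ind {motive : Otter → Prop} (mk : ∀ a : BT, motive ⟦a⟧) (t : Otter) :
    motive t :=
  Quotient.ind mk t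

theorem mk_eq_mk {a b : BT} : @Eq Otter ⟦a⟧ ⟦b⟧ ↔ Iso a b := Quotient.eq

theorem node_mk (a b : BT) : node ⟦a⟧ ⟦b⟧ = ⟦.node a b⟧ := rfl

theorem node_comm (s t : Otter) : node s t = node t s := by
  induction s using Otter.ind
  induction t using Otter.ind
  exact Quotient.sound (.swap (Iso.rfl _) (Iso.rfl _))

theorem node_eq_node {s t s' t' : Otter} : node s t = node s' t' ↔ s(s, t) = s(s', t') := by
  refine Iff.trans ?_ Sym2.eq_iff.symm
  induction s using Otter.ind
  induction t using Otter.ind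
  induction s' using Otter.ind
  induction t' using Otter.ind
  simp only [node_mk, mk_eq_mk]
  constructor
  · intro h
    cases h with
    | node h₁ h₂ => exact .inl ⟨h₁, h₂⟩
    | swap h₁ h₂ => exact .inr ⟨h₁, h₂⟩
  · rintro (⟨h₁, h₂⟩ | ⟨h₁, h₂⟩)
    exacts [.node h₁ h₂, .swap h₁ h₂]

theorem leaf_ne_node (s t : Otter) : leaf ≠ node s t := by
  induction s using Otter.ind
  induction t using Otter.ind
  rintro h
  nomatch Quotient.exact h

theorem eq_leaf_or_node (t : Otter) : t = leaf ∨ ∃ a b, t = node a b := by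
  induction t using Otter.ind with | _ t
  cases t with
  | leaf => exact .inl rfl
  | node a b => exact .inr ⟨⟦a⟧, ⟦b⟧, rfl⟩

@[simp] theorem leaves_leaf : leaf.leaves = 1 := rfl

@[simp] theorem sym_leaf : leaf.sym = 0 := rfl

@[simp] theorem leaves_node (s t : Otter) : (node s t).leaves = s.leaves + t.leaves := by
  induction s using Otter.ind
  induction t using Otter.ind
  rfl

theorem sym_node (s t : Otter) :
    (node s t).sym = s.sym + t.sym + if s = t then 1 else 0 := by
  induction s using Otter.ind
  induction t using Otter.ind
  exact congrArg _ (if_congr mk_eq_mk.symm rfl rfl)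

theorem one_le_leaves (t : Otter) : 1 ≤ t.leaves := by
  induction t using Otter.ind with | _ t
  induction t with
  | leaf => exact le_rfl
  | node a b iha _ => exact iha.trans (Nat.le_add_right _ _)

def join : Sym2 Otter → Otter := Sym2.lift ⟨node, node_comm⟩

@[simp] theorem join_mk (s t : Otter) : join s(s, t) = node s t := rfl

theorem join_injective : Function.Injective join := by
  refine Sym2.ind fun s t => Sym2.ind fun s' t' h => ?_
  exact node_eq_node.mp h

theorem finite_setOf_leaves_lt : ∀ n, {t : Otter | t.leaves < n}.Finite
  | 0 => by simp
  | n + 1 => by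
    refine (((finite_setOf_leaves_lt n).image2 node (finite_setOf_leaves_lt n)).insert leaf).subset
      fun t ht => ?_
    obtain rfl | ⟨a, b, rfl⟩ := eq_leaf_or_node t
    · exact Set.mem_insert _ _
    · have := one_le_leaves a
      have := one_le_leaves b
      simp only [Set.mem_ofPred_eq, leaves_node] at ht
      exact Set.mem_insert_of_mem _ (Set.mem_image2_of_mem (by simp; omega) (by simp; omega))

theorem finite_setOf_leaves_eq (n : ℕ) : {t : Otter | t.leaves = n}.Finite :=
  (finite_setOf_leaves_lt (n + 1)).subset fun t (ht : t.leaves = n) => by simp [ht]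

noncomputable def withLeaves (n : ℕ) : Finset Otter := (finite_setOf_leaves_eq n).toFinset

@[simp] theorem mem_withLeaves {n : ℕ} {t : Otter} : t ∈ withLeaves n ↔ t.leaves = n :=
  Set.Finite.mem_toFinset _

noncomputable def pairsWithLeaves (n : ℕ) : Finset (Otter × Otter) :=
  (antidiagonal n).biUnion fun ij => withLeaves ij.1 ×ˢ withLeaves ij.2

@[simp] theorem mem_pairsWithLeaves {n : ℕ} {p : Otter × Otter} :
    p ∈ pairsWithLeaves n ↔ p.1.leaves + p.2.leaves = n := by
  simp [pairsWithLeaves]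

theorem swap_mem_pairsWithLeaves {n : ℕ} {p : Otter × Otter} (hp : p ∈ pairsWithLeaves n) :
    p.swap ∈ pairsWithLeaves n := by
  rw [mem_pairsWithLeaves] at hp ⊢
  exact (add_comm _ _).trans hp

theorem sum_withLeaves {M : Type*} [AddCommMonoid M] (f : Otter → M) (n : ℕ) :
    ∑ t ∈ withLeaves n, f t
      = (if n = 1 then f leaf else 0)
        + ∑ z ∈ (pairsWithLeaves n).image (fun p => s(p.1, p.2)), f (join z) := by
  rw [← sum_filter_add_sum_filter_not _ (· = leaf)]
  congr 1
  · split_ifs with hn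
    · rw [sum_eq_single_of_mem leaf (by simp [hn]) fun t ht hne => absurd (mem_filter.mp ht).2 hne]
    · exact sum_eq_zero fun t ht => by
        obtain ⟨ht, rfl⟩ := mem_filter.mp ht
        exact absurd (mem_withLeaves.mp ht) (Ne.symm hn)
  · rw [← sum_image fun z _ w _ h => join_injective h, image_image]
    congr 1
    ext t
    simp only [mem_filter, mem_withLeaves, mem_image, mem_pairsWithLeaves, Function.comp_apply,
      join_mk, Prod.exists]
    constructor
    · rintro ⟨rfl, ht⟩
      obtain rfl | ⟨a, b, rfl⟩ := eq_leaf_or_node t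
      · exact absurd rfl ht
      · exact ⟨a, b, (leaves_node a b).symm, rfl⟩
    · rintro ⟨a, b, rfl, rfl⟩
      exact ⟨leaves_node a b, (leaf_ne_node a b).symm⟩

theorem sum_pairsWithLeaves_mul {R : Type*} [CommSemiring R] (f : Otter → R) (n : ℕ) :
    ∑ p ∈ pairsWithLeaves n, f p.1 * f p.2
      = ∑ ij ∈ antidiagonal n,
          (∑ s ∈ withLeaves ij.1, f s) * (∑ t ∈ withLeaves ij.2, f t) := by
  rw [pairsWithLeaves, sum_biUnion]
  · simp_rw [sum_mul_sum, sum_product]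
  · intro ij _ kl _ hne
    refine disjoint_left.mpr fun p hp hp' => hne ?_
    simp only [mem_product, mem_withLeaves] at hp hp'
    exact Prod.ext (hp.1.symm.trans hp'.1) (hp.2.symm.trans hp'.2)

theorem sum_pairsWithLeaves_diag {M : Type*} [AddCommMonoid M] (f : Otter × Otter → M)
    (n : ℕ) :
    ∑ p ∈ pairsWithLeaves n with p.1 = p.2, f p
      = if n % 2 = 0 then ∑ t ∈ withLeaves (n / 2), f (t, t) else 0 := by
  split_ifs with hn
  · refine sum_nbij' Prod.fst (fun t => (t, t)) ?_ ?_ ?_ ?_ ?_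
    · intro p hp
      obtain ⟨hp, hdiag⟩ := mem_filter.mp hp
      rw [mem_pairsWithLeaves, hdiag] at hp
      rw [mem_withLeaves, hdiag]
      omega
    · intro t ht
      exact mem_filter.mpr ⟨mem_pairsWithLeaves.mpr (by rw [mem_withLeaves.mp ht]; omega), rfl⟩
    · intro p hp
      exact Prod.ext rfl (mem_filter.mp hp).2
    · exact fun _ _ => rfl
    · rintro ⟨a, b⟩ hp
      obtain rfl : a = b := (mem_filter.mp hp).2
      rfl
  · refine sum_eq_zero fun p hp => ?_
    obtain ⟨hp, hdiag⟩ := mem_filter.mp hp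
    rw [mem_pairsWithLeaves, hdiag] at hp
    omega

end Otter

section GeneratingFunction

open Polynomial

theorem coeff_Fgen (n : ℕ) :
    PowerSeries.coeff n Fgen = ∑ t ∈ Otter.withLeaves n, (X : ℚ[X]) ^ t.sym := by
  rw [Fgen, PowerSeries.coeff_mk]
  exact (finsum_subtype_eq_finsum_cond (f := fun t : Otter => (X : ℚ[X]) ^ t.sym)
    fun t => t.leaves = n).trans
      (finsum_mem_eq_finite_toFinset_sum _ (Otter.finite_setOf_leaves_eq n))

theorem coeff_Fgen2 (n : ℕ) :
    PowerSeries.coeff n Fgen2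
      = ∑ p ∈ Otter.pairsWithLeaves n with p.1 = p.2, (X : ℚ[X]) ^ (p.1.sym + p.2.sym) := by
  rw [Otter.sum_pairsWithLeaves_diag, Fgen2, PowerSeries.coeff_mk, coeff_Fgen,
    Polynomial.sum_comp]
  simp only [pow_comp, X_comp, ← pow_mul, ← two_mul]

theorem coeff_Fgen_recurrence (n : ℕ) :
    PowerSeries.coeff n Fgen
      = (if n = 1 then 1 else 0)
        + C (1 / 2 : ℚ) * ∑ p ∈ Otter.pairsWithLeaves n, (X : ℚ[X]) ^ (p.1.sym + p.2.sym)
        + (X - C (1 / 2 : ℚ)) *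
          ∑ p ∈ Otter.pairsWithLeaves n with p.1 = p.2, (X : ℚ[X]) ^ (p.1.sym + p.2.sym) := by
  have hsym := (Otter.pairsWithLeaves n).two_nsmul_sum_image_sym2
    (fun _ => Otter.swap_mem_pairsWithLeaves) fun z => (X : ℚ[X]) ^ (Otter.join z).sym
  simp only [Otter.join_mk, Otter.sym_node, pow_add, pow_ite, pow_one, pow_zero,
    sum_mul_ite_one, filter_filter, and_self] at hsym
  have hhalf : C (1 / 2 : ℚ) * 2 = 1 := by
    rw [← C_ofNat, ← C_mul]
    norm_num
  rw [coeff_Fgen, Otter.sum_withLeaves, Otter.sym_leaf, pow_zero]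
  simp only [pow_add]
  rw [two_nsmul] at hsym
  set S := ∑ z ∈ (Otter.pairsWithLeaves n).image (fun p => s(p.1, p.2)),
    (X : ℚ[X]) ^ (Otter.join z).sym
  set D := ∑ p ∈ Otter.pairsWithLeaves n with p.1 = p.2, (X : ℚ[X]) ^ p.1.sym * X ^ p.2.sym
  linear_combination C (1 / 2 : ℚ) * hsym + (X * D - S) * hhalf

end GeneratingFunction

/-- `F(z,u) = z + (1/2) F(z,u)² + (u − 1/2) F(z², u²)`. -/
theorem F_functional_equation :
    Fgen = PowerSeries.X
      + PowerSeries.C (R := Polynomial ℚ) (Polynomial.C (1 / 2 : ℚ)) * Fgen ^ 2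
      + PowerSeries.C (R := Polynomial ℚ) (Polynomial.X - Polynomial.C (1 / 2 : ℚ)) * Fgen2 := by
  ext n
  rw [coeff_Fgen_recurrence, map_add, map_add, PowerSeries.coeff_X, PowerSeries.coeff_C_mul,
    PowerSeries.coeff_C_mul, sq, PowerSeries.coeff_mul, coeff_Fgen2]
  simp_rw [coeff_Fgen, ← Otter.sum_pairsWithLeaves_mul, ← pow_add]
end
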